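/- If ν is a distribution over linear orders on X and π is in the support of ν (ν(π) > 0), then the path associated with π on the probability flow diagram of the induced system of choice probabilities is supported, i.e., every Block–Marschak polynomial along that path is strictly positive. -/

import Mathlib

/-!
Falmagne's formula: for the choice probabilities induced by `ν`, the Block–Marschak polynomial
`q(x, A)` is the `ν`-mass of the orders whose weak lower contour set at `x` is exactly `A`.
Indeed `x` is `π`-maximal in `A'` iff `A' ⊆ {w | π w ≤ π x} =: L`, and the alternating sum of
`(-1) ^ |A' \ A|` over the interval `A ⊆ A' ⊆ L` of the Boolean lattice is `1` if `A = L` and `0`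
otherwise. Along the path of `π`, each `A_i` is the weak lower contour set at the element it
loses, so `π` contributes `ν π > 0` to every `q(A_i \ A_{i+1}, A_i)`.
-/

open Finset
open scoped Classical

/-- A linear order on a finite set `α`, encoded as a ranking bijection to `Fin (card α)`;
higher value means more preferred. -/
abbrev RankOrd (α : Type*) [Fintype α] := α ≃ Fin (Fintype.card α)

variable {α : Type*} [Fintype α] [DecidableEq α]

/-- `ν` is a probability distribution over linear orders. -/
def IsDist [Fintype α] (ν : RankOrd α → ℝ) : Prop :=
  (∀ π, 0 ≤ ν π) ∧ ∑ π : RankOrd α, ν π = 1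

/-- The choice probabilities induced by a distribution over linear orders. -/
noncomputable def choiceProb (ν : RankOrd α → ℝ) (A : Finset α) (x : α) : ℝ :=
  ∑ π : RankOrd α, if ∀ y ∈ A, y ≠ x → (π y : ℕ) < (π x : ℕ) then ν π else 0

/-- `ν` rationalizes the system of choice probabilities `P`. -/
def Rationalizes (ν : RankOrd α → ℝ) (P : Finset α → α → ℝ) : Prop :=
  IsDist ν ∧ ∀ A : Finset α, A.Nonempty → ∀ x ∈ A, P A x = choiceProb ν A x

/-- The Block–Marschak polynomial `q(x,A)` of a system of choice probabilities `P`. -/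
noncomputable def bm (P : Finset α → α → ℝ) (x : α) (A : Finset α) : ℝ :=
  ∑ A' ∈ Finset.univ.powerset.filter (fun A' => A ⊆ A'),
    (-1 : ℝ) ^ (A' \ A).card * P A' x

/-- A path: a maximal chain `X = A_0 ⊋ A_1 ⊋ ⋯ ⊋ A_{|X|} = ∅` decreasing by one element. -/
def IsPath (ρ : ℕ → Finset α) : Prop :=
  ρ 0 = Finset.univ ∧ ρ (Fintype.card α) = ∅ ∧
    ∀ i < Fintype.card α, ρ (i + 1) ⊆ ρ i ∧ (ρ i \ ρ (i + 1)).card = 1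

/-- A supported path: all Block–Marschak edge weights along it are strictly positive. -/
def SupportedPath (P : Finset α → α → ℝ) (ρ : ℕ → Finset α) : Prop :=
  IsPath ρ ∧ ∀ i < Fintype.card α, ∀ x ∈ ρ i \ ρ (i + 1), 0 < bm P x (ρ i)

/-- Two paths are branching: they agree on a consecutive block of nodes
`{i,…,j} ⊆ {1,…,|X|-1}` while differing at positions `i-1` and `j+1`. -/
def BranchingPair (ρ ρ' : ℕ → Finset α) : Prop :=
  ∃ i j, 1 ≤ i ∧ i ≤ j ∧ j ≤ Fintype.card α - 1 ∧
    ρ (i - 1) ≠ ρ' (i - 1) ∧ ρ (j + 1) ≠ ρ' (j + 1) ∧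
    ∀ m, i ≤ m → m ≤ j → ρ m = ρ' m

/-- The path associated with the linear order `π`: `A_i` is `X` minus the top `i` elements. -/
def pathOf (π : RankOrd α) : ℕ → Finset α :=
  fun i => Finset.univ.filter (fun w => (π w : ℕ) < Fintype.card α - i)

/-- The weak upper contour set of `x` according to `π`. -/
def upper (π : RankOrd α) (x : α) : Finset α :=
  Finset.univ.filter (fun w => (π x : ℕ) ≤ (π w : ℕ))

/-- `π ∈ M_{x,A}`: `π` ranks `X \ A` above `x` and `x` above `A \ {x}`. -/
def inM (π : RankOrd α) (x : α) (A : Finset α) : Prop :=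
  (∀ z, z ∉ A → (π x : ℕ) < (π z : ℕ)) ∧ ∀ y ∈ A, y ≠ x → (π y : ℕ) < (π x : ℕ)

section
variable {β : Type*}

theorem Finset.sum_Icc_neg_one_pow_card_sdiff [DecidableEq β] {R : Type*} [CommRing R]
    (A L : Finset β) :
    ∑ A' ∈ Icc A L, (-1 : R) ^ (A' \ A).card = if A = L then 1 else 0 := by
  by_cases h : A ⊆ L; swap
  · rw [Icc_eq_empty h, sum_empty, if_neg (fun e => h e.subset)]
  have disj {S : Finset β} (hS : S ∈ (L \ A).powerset) : Disjoint A S :=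
    disjoint_of_subset_right (mem_powerset.mp hS) disjoint_sdiff
  rw [Icc_eq_image_powerset h, sum_image fun S hS T hT hST => by
    rw [← union_sdiff_cancel_left (disj hS), ← union_sdiff_cancel_left (disj hT), hST]]
  rw [sum_congr rfl fun S hS => by rw [union_sdiff_cancel_left (disj hS)]]
  have := congrArg (Int.cast : ℤ → R) (sum_powerset_neg_one_pow_card (x := L \ A))
  push_cast at this
  rw [this]
  exact if_congr (by rw [sdiff_eq_empty_iff_subset, Subset.antisymm_iff, and_iff_right h]) rfl rfl

variable [Fintype β]

def RankOrd.weakLower (π : RankOrd β) (x : β) : Finset β :=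
  univ.filter fun w => (π w : ℕ) ≤ π x

theorem RankOrd.forall_lt_iff_subset_weakLower (π : RankOrd β) (x : β) (A : Finset β) :
    (∀ y ∈ A, y ≠ x → (π y : ℕ) < π x) ↔ A ⊆ π.weakLower x := by
  simp only [subset_iff, weakLower, mem_filter, mem_univ, true_and]
  refine forall₂_congr fun y _ => ?_
  have : y = x ↔ (π y : ℕ) = π x := by rw [Fin.val_inj, π.apply_eq_iff_eq]
  grind

theorem inM_iff_eq_weakLower (π : RankOrd β) (x : β) (A : Finset β) :
    inM π x A ↔ A = π.weakLower x := by
  rw [inM, π.forall_lt_iff_subset_weakLower, Subset.antisymm_iff, and_comm]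
  refine and_congr_right fun _ => ⟨fun h w hw => by_contra fun hwA => ?_, fun h z hz => ?_⟩
  · simp only [RankOrd.weakLower, mem_filter, mem_univ, true_and] at hw
    exact (h w hwA).not_ge hw
  · simpa [RankOrd.weakLower] using mt (@h z) hz

theorem sum_superset_neg_one_pow_mul_ite_subset [DecidableEq β] {R : Type*} [CommRing R]
    (A L : Finset β) (c : R) :
    ∑ A' ∈ univ.powerset.filter (fun A' => A ⊆ A'),
      (-1 : R) ^ (A' \ A).card * (if A' ⊆ L then c else 0) = if A = L then c else 0 := by
  have hIcc : (univ.powerset.filter fun A' => A ⊆ A').filter (· ⊆ L) = Icc A L := by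
    ext A'; simp
  simp only [mul_ite, mul_zero]
  rw [← sum_filter, hIcc, ← sum_mul, sum_Icc_neg_one_pow_card_sdiff, boole_mul]

theorem bm_choiceProb [DecidableEq β] (ν : RankOrd β → ℝ) (x : β) (A : Finset β) :
    bm (choiceProb ν) x A = ∑ π with inM π x A, ν π := by
  simp only [bm, choiceProb, mul_sum, RankOrd.forall_lt_iff_subset_weakLower]
  rw [sum_comm, sum_filter]
  refine sum_congr rfl fun π _ => ?_
  simp only [sum_superset_neg_one_pow_mul_ite_subset, inM_iff_eq_weakLower]

theorem bm_choiceProb_pos [DecidableEq β] {ν : RankOrd β → ℝ} (hν : ∀ π, 0 ≤ ν π)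
    {π : RankOrd β} (hπ : 0 < ν π) {x : β} {A : Finset β} (h : inM π x A) :
    0 < bm (choiceProb ν) x A := by
  rw [bm_choiceProb]
  exact sum_pos' (fun π _ => hν π) ⟨π, mem_filter.mpr ⟨mem_univ π, h⟩, hπ⟩

theorem mem_pathOf {π : RankOrd β} {i : ℕ} {w : β} :
    w ∈ pathOf π i ↔ (π w : ℕ) < Fintype.card β - i := by
  simp [pathOf]

theorem isPath_pathOf [DecidableEq β] (π : RankOrd β) : IsPath (pathOf π) := by
  refine ⟨eq_univ_of_forall fun w => mem_pathOf.mpr (π w).isLt,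
    eq_empty_of_forall_notMem fun w => by simp [mem_pathOf], fun i hi => ⟨fun w => ?_, ?_⟩⟩
  · simp only [mem_pathOf]; omega
  · refine card_eq_one.mpr ⟨π.symm ⟨Fintype.card β - i - 1, by omega⟩, ?_⟩
    ext w
    simp only [mem_sdiff, mem_pathOf, mem_singleton, Equiv.eq_symm_apply, Fin.ext_iff]
    omega

theorem pathOf_eq_weakLower [DecidableEq β] {π : RankOrd β} {i : ℕ} {x : β}
    (hx : x ∈ pathOf π i \ pathOf π (i + 1)) : pathOf π i = π.weakLower x := by
  rw [mem_sdiff, mem_pathOf, mem_pathOf] at hx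
  ext w
  simp only [mem_pathOf, RankOrd.weakLower, mem_filter, mem_univ, true_and]
  omega

end

/-- If `π` is in the support of `ν`, then the path associated with `π` is supported on
the probability flow diagram of the induced system of choice probabilities. -/
theorem pathOf_supported_of_mem_support {α : Type*} [Fintype α] [DecidableEq α]
    (ν : RankOrd α → ℝ) (hν : IsDist ν) (π : RankOrd α) (hπ : 0 < ν π) :
    SupportedPath (choiceProb ν) (pathOf π) :=
  ⟨isPath_pathOf π, fun _ _ x hx => bm_choiceProb_pos hν.1 hπ <|
    (inM_iff_eq_weakLower π x _).mpr (pathOf_eq_weakLower hx)⟩
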